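/- arXiv:1009.1031 — 5 statements merged into one kernel-verified Lean document; each statement's English description precedes it below -/
import Mathlib

section
/- For all n ≥ 2, the probability that a single mafia member wins a game with n players equals (n-1)!!/n!!, i.e., the function w defined by w(n,0)=0, w(n,m)=1 if m > n-m, and w(n,m) = ((n-m)/n)·w(n-2,m) + (m/n)·w(n-2,m-1) otherwise, satisfies w(n,1) = (n-1)!!/n!! for all n ≥ 2. -/
/-- Double factorial: 0!! = 1, 1!! = 1, n!! = n·(n-2)!!. -/
def dfact : ℕ → ℕ
  | 0 => 1
  | 1 => 1
  | n + 2 => (n + 2) * dfact n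

/-- Mafia winning-chance: w(n,0)=0, w(n,m)=1 if 2m>n, else
    w(n,m) = ((n-m)/n)·w(n-2,m) + (m/n)·w(n-2,m-1). -/
def w : ℕ → ℕ → ℚ
  | _, 0 => 0
  | n, m + 1 =>
    if h : 2 * (m + 1) > n then 1
    else ((n : ℚ) - (m + 1)) / n * w (n - 2) (m + 1)
      + ((m : ℚ) + 1) / n * w (n - 2) m
  termination_by n _ => n
  decreasing_by all_goals omega

lemma dfact_pos : ∀ n, 0 < dfact n
  | 0 => by simp [dfact]
  | 1 => by simp [dfact]
  | n + 2 => by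
      have := dfact_pos n
      simp [dfact]; positivity

theorem stmt_0 : ∀ n : ℕ, 2 ≤ n → w n 1 = (dfact (n - 1) : ℚ) / (dfact n : ℚ) := by
  intro n
  induction n using Nat.strong_induction_on with
  | _ n ih =>
    intro hn
    match n, hn with
    | 2, _ =>
      rw [w, dif_neg (by omega), w, show (2:ℕ) - 2 = 0 from rfl, w,
        dif_pos (by omega)]
      norm_num [dfact]
    | 3, _ =>
      rw [w, dif_neg (by omega), w, show (3:ℕ) - 2 = 1 from rfl, w,
        dif_pos (by omega)]
      norm_num [dfact]
    | (n + 4), _ =>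
      have ih' := ih (n + 2) (by omega) (by omega)
      rw [w, dif_neg (by omega)]
      have h0 : w (n + 4 - 2) 0 = 0 := by rw [w]
      rw [h0, show n + 4 - 2 = n + 2 from rfl, ih', mul_zero, add_zero]
      have hd1 : (dfact (n + 4) : ℚ) = (n + 4) * dfact (n + 2) := by
        rw [show dfact (n + 4) = (n + 4) * dfact (n + 2) from rfl]; push_cast; ring
      have hd2 : (dfact (n + 3) : ℚ) = (n + 3) * dfact (n + 1) := by
        rw [show dfact (n + 3) = (n + 3) * dfact (n + 1) from rfl]; push_cast; ring
      have e1 : (dfact (n + 2) : ℚ) ≠ 0 := by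
        exact_mod_cast (dfact_pos (n + 2)).ne'
      show _ = (dfact (n + 3) : ℚ) / (dfact (n + 4) : ℚ)
      rw [hd1, hd2, show n + 2 - 1 = n + 1 from rfl, div_mul_div_comm]
      congr 1 <;> push_cast <;> ring
end

section
/- For n with n - m ≥ m > 0 and n ≥ 2, the following three inequalities are equivalent: (i) w(n-2,m) > w(n,m); (ii) w(n,m) > w(n-2,m-1); (iii) w(n-2,m) > w(n-2,m-1). -/
theorem stmt_5 : ∀ n m : ℕ, 0 < m → m ≤ n - m → 2 ≤ n →
    ((w (n - 2) m > w n m ↔ w n m > w (n - 2) (m - 1)) ∧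
     (w n m > w (n - 2) (m - 1) ↔ w (n - 2) m > w (n - 2) (m - 1))) := by
  rintro n m hm hmn hn
  obtain ⟨k, rfl⟩ : ∃ k, m = k + 1 := ⟨m - 1, by omega⟩
  have h2 : 2 * (k + 1) ≤ n := by omega
  have hw : w n (k + 1) = ((n : ℚ) - (k + 1)) / n * w (n - 2) (k + 1)
      + ((k : ℚ) + 1) / n * w (n - 2) k := by
    rw [w]; rw [dif_neg (by omega)]
  set x := w (n - 2) (k + 1)
  set y := w (n - 2) k
  have hn0 : (0 : ℚ) < n := by positivity
  have hnk : (0 : ℚ) < (n : ℚ) - (k + 1) := by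
    have h3 : ((k + 2 : ℕ) : ℚ) ≤ n := Nat.cast_le.mpr (by omega)
    push_cast at h3
    linarith
  have hk : (0 : ℚ) < (k : ℚ) + 1 := by positivity
  have key : (n : ℚ) * w n (k + 1) = ((n : ℚ) - (k + 1)) * x + ((k : ℚ) + 1) * y := by
    rw [hw]; field_simp
  simp only [Nat.add_sub_cancel]
  constructor <;> constructor <;> intro h
  · nlinarith [mul_lt_mul_of_pos_left h hn0]
  · nlinarith [mul_lt_mul_of_pos_left h hn0]
  · nlinarith [mul_lt_mul_of_pos_left h hn0]
  · nlinarith [mul_lt_mul_of_pos_left h hnk, mul_lt_mul_of_pos_left h hk]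
end

section
/- Changing a mafia member into a citizen never increases the mafia winning-chance: for all n, m with m + 1 ≤ n, w(n,m+1) ≥ w(n,m); moreover, if n - m ≥ m + 1 ≥ 2 then the inequality is strict: w(n,m+1) > w(n,m). -/
lemma w_nonneg (n m : ℕ) : 0 ≤ w n m := by
  match m with
  | 0 => simp [w]
  | m + 1 =>
    rw [w]
    split
    · norm_num
    · rename_i h
      have hn : 2 * (m + 1) ≤ n := by omega
      have h1 := w_nonneg (n - 2) (m + 1)
      have h2 := w_nonneg (n - 2) m
      have hc1 : (0:ℚ) ≤ ((n : ℚ) - (m + 1)) / n := by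
        apply div_nonneg
        · have : ((m:ℚ) + 1) ≤ n := by exact_mod_cast by omega
          linarith
        · positivity
      have hc2 : (0:ℚ) ≤ ((m : ℚ) + 1) / n := by positivity
      have := mul_nonneg hc1 h1
      have := mul_nonneg hc2 h2
      linarith
termination_by n

lemma w_le_one (n m : ℕ) : w n m ≤ 1 := by
  match m with
  | 0 => simp [w]
  | m + 1 =>
    rw [w]
    split
    · norm_num
    · rename_i h
      have hn : 2 * (m + 1) ≤ n := by omega
      have hn' : (0:ℚ) < n := by exact_mod_cast by omega
      have h1 := w_le_one (n - 2) (m + 1)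
      have h1' := w_nonneg (n - 2) (m + 1)
      have h2 := w_le_one (n - 2) m
      have h2' := w_nonneg (n - 2) m
      have hm : ((m:ℚ) + 1) ≤ n := by exact_mod_cast by omega
      have hc1 : (0:ℚ) ≤ (n : ℚ) - (m + 1) := by linarith
      have e1 : ((n : ℚ) - (m + 1)) / n * w (n-2) (m+1) ≤ ((n : ℚ) - (m + 1)) / n * 1 := by
        apply mul_le_mul_of_nonneg_left h1 (by positivity)
      have e2 : ((m : ℚ) + 1) / n * w (n-2) m ≤ ((m : ℚ) + 1) / n * 1 := by
        apply mul_le_mul_of_nonneg_left h2 (by positivity)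
      have : ((n : ℚ) - (m + 1)) / n + ((m : ℚ) + 1) / n = 1 := by
        field_simp
        ring
      linarith
termination_by n

lemma w_pos (n m : ℕ) (hm : 1 ≤ m) : 0 < w n m := by
  match m with
  | m + 1 =>
    rw [w]
    split
    · norm_num
    · rename_i h
      have hn : 2 * (m + 1) ≤ n := by omega
      have hn' : (0:ℚ) < n := by exact_mod_cast by omega
      have hm' : ((m:ℚ) + 1) < n := by exact_mod_cast by omega
      have h1 := w_pos (n - 2) (m + 1) (by omega)
      have h2 := w_nonneg (n - 2) m
      have hc1 : (0:ℚ) < ((n : ℚ) - (m + 1)) / n := by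
        apply div_pos (by linarith) hn'
      have hc2 : (0:ℚ) ≤ ((m : ℚ) + 1) / n := by positivity
      nlinarith
termination_by n

lemma w_lt_one (n m : ℕ) (h2m : 2 * m ≤ n) : w n m < 1 := by
  match m with
  | 0 => simp [w]
  | m + 1 =>
    have h : ¬ 2 * (m + 1) > n := by omega
    rw [w, dif_neg h]
    have hn' : (0:ℚ) < n := by exact_mod_cast by omega
    have hm : ((m:ℚ) + 1) ≤ n := by exact_mod_cast by omega
    have h1 := w_le_one (n - 2) (m + 1)
    have h2 := w_lt_one (n - 2) m (by omega)
    have e1 : ((n : ℚ) - (m + 1)) / n * w (n-2) (m+1) ≤ ((n : ℚ) - (m + 1)) / n * 1 := by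
      apply mul_le_mul_of_nonneg_left h1 (div_nonneg (by linarith) (le_of_lt hn'))
    have hc2 : (0:ℚ) < ((m : ℚ) + 1) / n := div_pos (by positivity) hn'
    have e2 : ((m : ℚ) + 1) / n * w (n-2) m < ((m : ℚ) + 1) / n * 1 := by
      apply mul_lt_mul_of_pos_left h2 hc2
    have : ((n : ℚ) - (m + 1)) / n + ((m : ℚ) + 1) / n = 1 := by field_simp; ring
    linarith
termination_by n

lemma w_mono (n m : ℕ) : w n m ≤ w n (m + 1) := by
  by_cases h : 2 * (m + 1) > n
  · rw [w, dif_pos h]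
    exact w_le_one n m
  · have hn : 2 * (m + 1) ≤ n := by omega
    match m with
    | 0 =>
      rw [show w n 0 = 0 from by simp [w]]
      exact w_nonneg n 1
    | m + 1 =>
      have h' : ¬ 2 * (m + 1) > n := by omega
      have eq1 : w n (m + 1 + 1) = ((n : ℚ) - (m + 1 + 1)) / n * w (n - 2) (m + 1 + 1)
          + ((m : ℚ) + 1 + 1) / n * w (n - 2) (m + 1) := by
        rw [w, dif_neg h]; push_cast; ring_nf
      have eq2 : w n (m + 1) = ((n : ℚ) - (m + 1)) / n * w (n - 2) (m + 1)
          + ((m : ℚ) + 1) / n * w (n - 2) m := by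
        rw [w, dif_neg h']
      rw [eq1, eq2]
      have hn' : (0:ℚ) < n := by exact_mod_cast by omega
      have hcast : (2:ℚ) * (m + 2) ≤ n := by exact_mod_cast by push_cast; omega
      have ih1 := w_mono (n - 2) (m + 1)
      have ih2 := w_mono (n - 2) m
      set A := w (n-2) (m+2) with hA
      set B := w (n-2) (m+1) with hB
      set C := w (n-2) m with hC
      have key1 : (0:ℚ) ≤ ((n:ℚ) - (m + 2)) * (A - B) := by
        apply mul_nonneg (by push_cast; linarith) (by push_cast at ih1 ⊢; linarith)
      have key2 : (0:ℚ) ≤ ((m:ℚ) + 1) * (B - C) := by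
        apply mul_nonneg (by positivity) (by linarith)
      rw [div_mul_eq_mul_div, div_mul_eq_mul_div, div_mul_eq_mul_div, div_mul_eq_mul_div,
        ← add_div, ← add_div, div_le_div_iff_of_pos_right hn']
      push_cast
      nlinarith
termination_by n
decreasing_by all_goals omega

lemma w_strict (n m : ℕ) (hm : 1 ≤ m) (hn : 2 * m + 1 ≤ n) : w n m < w n (m + 1) := by
  by_cases h : 2 * (m + 1) > n
  · rw [w, dif_pos h]
    exact w_lt_one n m (by omega)
  · match m, hm with
    | m + 1, _ =>
      have h' : ¬ 2 * (m + 1) > n := by omega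
      have eq1 : w n (m + 1 + 1) = ((n : ℚ) - (m + 1 + 1)) / n * w (n - 2) (m + 1 + 1)
          + ((m : ℚ) + 1 + 1) / n * w (n - 2) (m + 1) := by
        rw [w, dif_neg h]; push_cast; ring_nf
      have eq2 : w n (m + 1) = ((n : ℚ) - (m + 1)) / n * w (n - 2) (m + 1)
          + ((m : ℚ) + 1) / n * w (n - 2) m := by
        rw [w, dif_neg h']
      rw [eq1, eq2]
      have hn' : (0:ℚ) < n := by exact_mod_cast by omega
      have hcast : (2:ℚ) * (m + 2) ≤ n := by exact_mod_cast by push_cast; omega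
      have ih1 := w_mono (n - 2) (m + 1)
      have hBC : w (n - 2) m < w (n - 2) (m + 1) := by
        rcases m with _ | m'
        · rw [show w (n - 2) 0 = 0 from by simp [w]]
          exact w_pos (n - 2) 1 le_rfl
        · exact w_strict (n - 2) (m' + 1) (by omega) (by omega)
      set A := w (n-2) (m+2) with hA
      set B := w (n-2) (m+1) with hB
      set C := w (n-2) m with hC
      have key1 : (0:ℚ) ≤ ((n:ℚ) - (m + 2)) * (A - B) := by
        apply mul_nonneg (by linarith) (by linarith)
      have key2 : (0:ℚ) < ((m:ℚ) + 1) * (B - C) := by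
        apply mul_pos (by positivity) (by linarith)
      rw [div_mul_eq_mul_div, div_mul_eq_mul_div, div_mul_eq_mul_div, div_mul_eq_mul_div,
        ← add_div, ← add_div, div_lt_div_iff_of_pos_right hn']
      nlinarith
termination_by n
decreasing_by all_goals omega

theorem stmt_7 :
    (∀ n m : ℕ, m + 1 ≤ n → w n (m + 1) ≥ w n m) ∧
    (∀ n m : ℕ, 1 ≤ m → m + 1 ≤ n - m → w n (m + 1) > w n m) := by
  constructor
  · intro n m _
    exact w_mono n m
  · intro n m hm hnm
    exact w_strict n m hm (by omega)
end

section
/- The mean number of mafia members after t turns satisfies ⟨m⟩(t) = M·∏_{i=0}^{t-1} (N-2i-1)/(N-2i), for all t with N - 2t - M ≥ 0. -/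
/-- The pure death process of the Mafia game: p_m(0) = δ_{mM} and
    p_m(t+1) = ((N-2t-m)/(N-2t))·p_m(t) + ((m+1)/(N-2t))·p_{m+1}(t). -/
def deathP (N M : ℕ) : ℕ → ℕ → ℚ
  | 0, m => if m = M then 1 else 0
  | t + 1, m =>
      ((N : ℚ) - 2 * t - m) / ((N : ℚ) - 2 * t) * deathP N M t m
        + ((m : ℚ) + 1) / ((N : ℚ) - 2 * t) * deathP N M t (m + 1)

lemma deathP_vanish (N M : ℕ) : ∀ t m, M < m → deathP N M t m = 0 := by
  intro t
  induction t with
  | zero =>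
    intro m hm
    simp only [deathP, if_neg (by omega : ¬ m = M)]
  | succ t ih =>
    intro m hm
    simp [deathP, ih m hm, ih (m + 1) (by omega)]

theorem stmt_12 (N M : ℕ) (hMN : M ≤ N) :
    ∀ t : ℕ, 2 * t + M ≤ N →
      ∑ m ∈ Finset.range (M + 1), (m : ℚ) * deathP N M t m =
        (M : ℚ) * ∏ i ∈ Finset.range t, (((N : ℚ) - 2 * i - 1) / ((N : ℚ) - 2 * i)) := by
  rcases Nat.eq_zero_or_pos M with hM | hM
  · subst hM
    intro t _
    simp
  intro t
  induction t with
  | zero =>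
    intro _
    simp [deathP, Finset.mul_sum, mul_ite]
  | succ t ih =>
    intro ht
    have ht' : 2 * t + M ≤ N := by omega
    have hd : (N : ℚ) - 2 * t ≠ 0 := by
      have h1 : 2 * t + 1 ≤ N := by omega
      have : (2 * t + 1 : ℚ) ≤ N := by exact_mod_cast h1
      push_cast at this ⊢
      linarith
    have shift : ∑ m ∈ Finset.range (M + 1), ((m : ℚ) * (m + 1)) * deathP N M t (m + 1)
        = ∑ m ∈ Finset.range (M + 1), ((m : ℚ) - 1) * m * deathP N M t m := by
      have h1 := Finset.sum_range_succ'
        (fun m => ((m : ℚ) - 1) * m * deathP N M t m) (M + 1)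
      have h2 := Finset.sum_range_succ
        (fun m => ((m : ℚ) - 1) * m * deathP N M t m) (M + 1)
      rw [h2, deathP_vanish N M t (M + 1) (by omega)] at h1
      simp only [mul_zero, add_zero, Nat.cast_zero, zero_mul] at h1
      rw [h1]
      apply Finset.sum_congr rfl
      intro m _
      push_cast
      ring
    have key : ∑ m ∈ Finset.range (M + 1), (m : ℚ) * deathP N M (t + 1) m
        = (((N : ℚ) - 2 * t - 1) / ((N : ℚ) - 2 * t))
          * ∑ m ∈ Finset.range (M + 1), (m : ℚ) * deathP N M t m := by
      calc ∑ m ∈ Finset.range (M + 1), (m : ℚ) * deathP N M (t + 1) m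
          = ∑ m ∈ Finset.range (M + 1),
              (((m : ℚ) * ((N : ℚ) - 2 * t - m)) / ((N : ℚ) - 2 * t) * deathP N M t m
                + (1 / ((N : ℚ) - 2 * t)) * (((m : ℚ) * (m + 1)) * deathP N M t (m + 1))) := by
            apply Finset.sum_congr rfl
            intro m _
            simp only [deathP]
            ring
        _ = ∑ m ∈ Finset.range (M + 1),
              ((m : ℚ) * ((N : ℚ) - 2 * t - m)) / ((N : ℚ) - 2 * t) * deathP N M t m
            + (1 / ((N : ℚ) - 2 * t))
              * ∑ m ∈ Finset.range (M + 1), ((m : ℚ) * (m + 1)) * deathP N M t (m + 1) := by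
            rw [Finset.sum_add_distrib, Finset.mul_sum]
        _ = ∑ m ∈ Finset.range (M + 1),
              ((m : ℚ) * ((N : ℚ) - 2 * t - m)) / ((N : ℚ) - 2 * t) * deathP N M t m
            + (1 / ((N : ℚ) - 2 * t))
              * ∑ m ∈ Finset.range (M + 1), ((m : ℚ) - 1) * m * deathP N M t m := by
            rw [shift]
        _ = ∑ m ∈ Finset.range (M + 1),
              ((((N : ℚ) - 2 * t - 1) / ((N : ℚ) - 2 * t)) * ((m : ℚ) * deathP N M t m)) := by
            rw [Finset.mul_sum, ← Finset.sum_add_distrib]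
            apply Finset.sum_congr rfl
            intro m _
            field_simp
            ring
        _ = _ := by rw [← Finset.mul_sum]
    rw [key, ih ht', Finset.prod_range_succ]
    ring
end

section
/- The function p̃_m(t) = C(M,m)·(1 - √(1 - 2t/N))^{M-m}·(√(1 - 2t/N))^m satisfies the system of ODEs d/dt p̃_m(t) = -(m/(N-2t))·p̃_m(t) + ((m+1)/(N-2t))·p̃_{m+1}(t) for 0 ≤ m ≤ M and 0 ≤ t < N/2, with initial condition p̃_m(0) = δ_{mM}. -/
open Real

/-- Continuous-time approximation of the death process:
    p̃_m(t) = C(M,m)·(1 - √(1-2t/N))^(M-m)·(√(1-2t/N))^m.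
    (Note C(M,m) = 0 for m > M, so p̃_{M+1} ≡ 0.) -/
noncomputable def ptilde (N M : ℕ) (m : ℕ) (t : ℝ) : ℝ :=
  (M.choose m : ℝ) * (1 - Real.sqrt (1 - 2 * t / N)) ^ (M - m) *
    (Real.sqrt (1 - 2 * t / N)) ^ m

private lemma alg_lt (N : ℕ) (C1 C2 : ℝ) (m a : ℕ) (s : ℝ) (hN0 : (N:ℝ) ≠ 0)
    (hs_ne : s ≠ 0)
    (hchoose : ((m:ℝ) + 1) * C2 = ((a:ℝ) + 1) * C1) :
    -(m / ((N:ℝ) * s ^ 2)) * (C1 * (1 - s) ^ (a+1) * s ^ m)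
      + ((m:ℝ) + 1) / ((N:ℝ) * s ^ 2) * (C2 * (1 - s) ^ a * s ^ (m+1))
    = C1 * ((a+1 : ℕ) * (1 - s) ^ a * (-(1 / (2 * s) * -(2 / N)))) * s ^ m
      + C1 * (1 - s) ^ (a+1) * ((m : ℕ) * s ^ (m-1) * (1 / (2 * s) * -(2 / N))) := by
  rcases Nat.eq_zero_or_pos m with h0 | h0
  · subst h0
    push_cast [Nat.cast_add, Nat.cast_one] at hchoose ⊢
    field_simp
    linear_combination (s * (1-s)^a) * hchoose
  · obtain ⟨b, hb⟩ : ∃ b, m = b + 1 := ⟨m - 1, by omega⟩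
    subst hb
    simp only [Nat.add_sub_cancel]
    push_cast [Nat.cast_add, Nat.cast_one] at hchoose ⊢
    field_simp
    linear_combination (s^2 * s^b * (1-s)^a) * hchoose

private lemma alg_eq (N : ℕ) (m : ℕ) (s : ℝ) (hN0 : (N:ℝ) ≠ 0) (hs_ne : s ≠ 0) :
    -((m:ℝ) / ((N:ℝ) * s ^ 2)) * (1 * 1 * s ^ m)
    = 1 * ((0:ℝ) * (1 - s) ^ (m - m - 1) * (-(1 / (2 * s) * -(2 / N)))) * s ^ m
      + 1 * 1 * ((m : ℕ) * s ^ (m-1) * (1 / (2 * s) * -(2 / N))) := by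
  rcases Nat.eq_zero_or_pos m with h0 | h0
  · subst h0; simp
  · obtain ⟨b, hb⟩ : ∃ b, m = b + 1 := ⟨m - 1, by omega⟩
    subst hb
    simp only [Nat.add_sub_cancel]
    push_cast
    field_simp
    ring

theorem stmt_13 (N M : ℕ) (hN : 0 < N) (hM : 0 < M) (hMN : M ≤ N) :
    (∀ m : ℕ, m ≤ M → ∀ t : ℝ, 0 ≤ t → t < (N : ℝ) / 2 →
      HasDerivAt (ptilde N M m)
        (-(m / ((N : ℝ) - 2 * t)) * ptilde N M m t
          + ((m : ℝ) + 1) / ((N : ℝ) - 2 * t) * ptilde N M (m + 1) t) t) ∧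
    (∀ m : ℕ, m ≤ M → ptilde N M m 0 = if m = M then 1 else 0) := by
  have hN0 : (N : ℝ) ≠ 0 := Nat.cast_ne_zero.mpr hN.ne'
  constructor
  · intro m hm t ht htN
    set s := Real.sqrt (1 - 2 * t / N) with hs_def
    have hx : (0:ℝ) < 1 - 2 * t / N := by
      have : 2 * t < N := by linarith
      rw [sub_pos, div_lt_one (by positivity)]
      linarith
    have hs_pos : 0 < s := Real.sqrt_pos.mpr hx
    have hs_ne : s ≠ 0 := hs_pos.ne'
    have hs_sq : s ^ 2 = 1 - 2 * t / N := Real.sq_sqrt hx.le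
    have hNt : (N : ℝ) - 2 * t = N * s ^ 2 := by
      rw [hs_sq]; field_simp
    have h1 : HasDerivAt (fun u : ℝ => 1 - 2 * u / N) (-(2 / N)) t := by
      simpa using ((hasDerivAt_id t).const_mul (2:ℝ)).div_const (N:ℝ) |>.const_sub 1
    have hs : HasDerivAt (fun u : ℝ => Real.sqrt (1 - 2 * u / N))
        (1 / (2 * s) * (-(2 / N))) t := by
      exact (Real.hasDerivAt_sqrt hx.ne').comp t h1
    have h2 : HasDerivAt (fun u : ℝ => (1 - Real.sqrt (1 - 2 * u / N)) ^ (M - m))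
        ((M - m : ℕ) * (1 - s) ^ (M - m - 1) * (-(1 / (2 * s) * (-(2 / N))))) t := by
      exact (hs.const_sub 1).pow (M - m)
    have h3 : HasDerivAt (fun u : ℝ => (Real.sqrt (1 - 2 * u / N)) ^ m)
        ((m : ℕ) * s ^ (m - 1) * (1 / (2 * s) * (-(2 / N)))) t := hs.pow m
    have hD : HasDerivAt (ptilde N M m)
        (((M.choose m : ℝ) * ((M - m : ℕ) * (1 - s) ^ (M - m - 1) *
            (-(1 / (2 * s) * (-(2 / N)))))) * s ^ m
          + (M.choose m : ℝ) * (1 - s) ^ (M - m) *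
            ((m : ℕ) * s ^ (m - 1) * (1 / (2 * s) * (-(2 / N))))) t := by
      unfold ptilde
      exact ((h2.const_mul (M.choose m : ℝ)).mul h3)
    convert hD using 1
    simp only [ptilde, ← hs_def]
    clear_value s
    rw [hNt]
    rcases eq_or_lt_of_le hm with hmeq | hmlt
    · subst hmeq
      have hc0 : (m.choose (m + 1) : ℝ) = 0 := by
        norm_cast
        exact Nat.choose_eq_zero_of_lt (Nat.lt_succ_self m)
      simp only [Nat.sub_self, pow_zero, Nat.choose_self, Nat.cast_one, hc0,
        Nat.cast_zero, zero_mul, mul_zero, add_zero, zero_add]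
      simpa using alg_eq N m s hN0 hs_ne
    · obtain ⟨a, ha⟩ : ∃ a, M - m = a + 1 := ⟨M - m - 1, by omega⟩
      have hchoose : ((m : ℝ) + 1) * (M.choose (m+1) : ℝ) = ((a:ℝ) + 1) * (M.choose m : ℝ) := by
        have h := Nat.choose_succ_right_eq M m
        have hcast : (M.choose (m+1)) * (m+1) = (M.choose m) * (a+1) := by
          rw [h, ha]
        have : ((M.choose (m+1)) * (m+1) : ℝ) = ((M.choose m) * (a+1) : ℕ) := by
          exact_mod_cast congrArg (Nat.cast : ℕ → ℝ) hcast
        push_cast at this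
        linarith
      rw [ha]
      have hsub : M - (m+1) = a := by omega
      have hsub2 : (a + 1 : ℕ) - 1 = a := rfl
      rw [hsub, hsub2]
      exact alg_lt N (M.choose m : ℝ) (M.choose (m+1) : ℝ) m a s hN0 hs_ne hchoose
  · intro m hm
    unfold ptilde
    have h1 : (1 : ℝ) - 2 * 0 / N = 1 := by norm_num
    rw [h1, Real.sqrt_one]
    split_ifs with h
    · subst h; simp
    · have hne : M - m ≠ 0 := by omega
      simp [zero_pow hne]
end
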